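/- Let G be a finite simple graph and let f and g be configurations of G with f(v) ≥ g(v) for every vertex v. Then bg(G; f) ≤ bg(G; g) and b̂g(G; f) ≤ b̂g(G; g); moreover, bg(G; g) − bg(G; f) ≤ 2·∑_v (f(v) − g(v)) and b̂g(G; g) − b̂g(G; f) ≤ 2·∑_v (f(v) − g(v)). -/

import Mathlib

open Classical

namespace BrushGame

variable {V : Type*}

/-- The number of neighbours of `x` in `G` that belong to the list `l`. -/
noncomputable def nbr [Fintype V] (G : SimpleGraph V) (x : V) (l : List V) : ℕ :=
  (Finset.univ.filter (fun u => G.Adj x u ∧ u ∈ l)).card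

/-- The degree of `x` in `G`. -/
noncomputable def deg [Fintype V] (G : SimpleGraph V) (x : V) : ℕ :=
  (Finset.univ.filter (fun u => G.Adj x u)).card

/-- `l` is a valid sequence of vertex firings starting from the brush assignment `c`:
the vertices of `l` fire in order; when a vertex fires, the number of brushes on it
(those from `c` plus one from each previously fired neighbour) is at least its number of
still-dirty neighbours. -/
def FiringSeq [Fintype V] (G : SimpleGraph V) (c : V → ℕ) (l : List V) : Prop :=
  l.Nodup ∧ ∀ i : Fin l.length,
    deg G (l.get i) ≤ c (l.get i) + 2 * nbr G (l.get i) (l.take i.1)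

/-- Vertex `v` gets cleaned, starting from the assignment `c` of brushes. -/
def Cleaned [Fintype V] (G : SimpleGraph V) (c : V → ℕ) (v : V) : Prop :=
  ∃ l, FiringSeq G c l ∧ v ∈ l

/-- All vertices are clean, i.e. the game is over. -/
def Over [Fintype V] (G : SimpleGraph V) (c : V → ℕ) : Prop := ∀ v, Cleaned G c v

/-- An upper bound on the number of turns of any brushing game on `G` (plus one). -/
noncomputable def fuel [Fintype V] (G : SimpleGraph V) : ℕ := (∑ v, deg G v) + 1

/-- The value (number of brushes placed from now on, under optimal play) of the brushing
game on `G` from the brush assignment `c`, with `n` turns of fuel remaining;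
`mover = true` means that it is Min's turn to place a brush (on a dirty vertex),
`mover = false` that it is Max's turn.  The fuel never runs out along legal play when
the game is started with fuel `fuel G`. -/
noncomputable def val [Fintype V] (G : SimpleGraph V) : Bool → ℕ → (V → ℕ) → ℕ
  | _, 0, _ => 0
  | mover, n + 1, c =>
    if Over G c then 0
    else if mover then
      1 + sInf {k | ∃ v, ¬ Cleaned G c v ∧ k = val G false n (Function.update c v (c v + 1))}
    else
      1 + sSup {k | ∃ v, ¬ Cleaned G c v ∧ k = val G true n (Function.update c v (c v + 1))}

/-- The game brush number of `G` starting from the initial configuration `f`, Min to move. -/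
noncomputable def bgFrom [Fintype V] (G : SimpleGraph V) (f : V → ℕ) : ℕ :=
  val G true (fuel G) f

/-- The game brush number of `G` starting from the initial configuration `f`, Max to move. -/
noncomputable def bghatFrom [Fintype V] (G : SimpleGraph V) (f : V → ℕ) : ℕ :=
  val G false (fuel G) f

/-- The (Min-start) game brush number of `G`. -/
noncomputable def bg [Fintype V] (G : SimpleGraph V) : ℕ := bgFrom G (fun _ => 0)

/-- The Max-start game brush number of `G`. -/
noncomputable def bghat [Fintype V] (G : SimpleGraph V) : ℕ := bghatFrom G (fun _ => 0)

/-- `G` can be cleaned by the configuration `f`. -/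
def CleansBy [Fintype V] (G : SimpleGraph V) (f : V → ℕ) : Prop :=
  ∃ l, FiringSeq G f l ∧ ∀ v : V, v ∈ l

/-- The brush number of `G`. -/
noncomputable def bNum [Fintype V] (G : SimpleGraph V) : ℕ :=
  sInf {k | ∃ f, CleansBy G f ∧ k = ∑ v, f v}

end BrushGame

/-!
Monotonicity: from a larger configuration Max has fewer moves, and Min can copy her optimal
move unless that vertex is already clean there; then she plays anywhere else, which is no worse
than brushing the clean vertex, and that brush is wasted since it changes no firing.

For the bound it suffices to compare `c` with `c + 1_x` and show, by induction on the fuel,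
that their values differ by at most two. Min copies her optimal move of the richer game, and
Max's moves on vertices still dirty in `c + 1_x` are copied too. If Max brushes a vertex `w`
already clean in `c + 1_x`, Min answers at `x`; the brush on `w` is then wasted and play
continues from `c + 1_x` after two extra moves. Adding the brushes of `f - g` one at a time gives `2 ∑ (f - g)`.

A brush on a clean vertex `v` changes no firing because a firing sequence of `c + 1_v`, stripped
of repetitions, can be appended to one of `c` that cleans `v`.
-/

theorem le_add_mul_sum_of_le_add_single {ι : Type*} [Fintype ι] [DecidableEq ι]
    {φ : (ι → ℕ) → ℕ} {k : ℕ} (hφ : ∀ c i, φ c ≤ φ (c + Pi.single i 1) + k) (c d : ι → ℕ) :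
    φ c ≤ φ (c + d) + k * ∑ i, d i := by
  induction d using Pi.single_induction generalizing c with
  | zero => simp
  | add d e hd he =>
    calc φ c ≤ φ (c + d) + k * ∑ i, d i := hd c
      _ ≤ φ (c + d + e) + k * ∑ i, e i + k * ∑ i, d i := by grw [he (c + d)]
      _ = φ (c + (d + e)) + k * ∑ i, (d + e) i := by
        simp only [Pi.add_apply, Finset.sum_add_distrib, add_assoc]; ring
  | single i m =>
    rw [Fintype.sum_pi_single']
    induction m generalizing c with
    | zero => simp
    | succ m ih =>
      calc φ c ≤ φ (c + Pi.single i m) + k * m := ih c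
        _ ≤ φ (c + Pi.single i m + Pi.single i 1) + k + k * m := by
          have := hφ (c + Pi.single i m) i; omega
        _ = φ (c + Pi.single i (m + 1)) + k * (m + 1) := by
          rw [Pi.single_add, ← add_assoc]; ring

namespace BrushGame

lemma update_add_one_eq_add_single {V : Type*} (c : V → ℕ) (v : V) :
    Function.update c v (c v + 1) = c + Pi.single v 1 := by
  ext u
  by_cases h : u = v <;> simp [h]

variable {V : Type*} [Fintype V] {G : SimpleGraph V} {c c' : V → ℕ} {l m : List V} {u v x : V}

lemma nbr_mono (h : ∀ z ∈ l, z ∈ m) : nbr G x l ≤ nbr G x m :=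
  Finset.card_le_card fun z hz => by
    simp only [Finset.mem_filter] at hz ⊢
    exact ⟨hz.1, hz.2.1, h z hz.2.2⟩

lemma firingSeq_iff : FiringSeq G c l ↔ l.Nodup ∧
    ∀ i (hi : i < l.length), deg G l[i] ≤ c l[i] + 2 * nbr G l[i] (l.take i) :=
  and_congr_right' ⟨fun h i hi => h ⟨i, hi⟩, fun h i => h i i.2⟩

lemma FiringSeq.mono (h : c ≤ c') (hl : FiringSeq G c l) : FiringSeq G c' l :=
  ⟨hl.1, fun i => (hl.2 i).trans (by grw [h (l.get i)])⟩

lemma firingSeq_append_singleton :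
    FiringSeq G c (l ++ [x]) ↔ FiringSeq G c l ∧ x ∉ l ∧ deg G x ≤ c x + 2 * nbr G x l := by
  simp only [firingSeq_iff, List.nodup_append, List.nodup_singleton, List.mem_singleton,
    List.length_append, List.length_singleton]
  constructor
  · rintro ⟨⟨hl, -, hx⟩, h⟩
    refine ⟨⟨hl, fun i hi => ?_⟩, fun hxl => hx x hxl x rfl rfl, ?_⟩
    · simpa [List.getElem_append_left hi, List.take_append, Nat.sub_eq_zero_of_le hi.le]
        using h i (by omega)
    · simpa using h l.length (by omega)
  · rintro ⟨⟨hl, h⟩, hxl, hx⟩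
    refine ⟨⟨hl, trivial, by rintro _ hy _ rfl rfl; exact hxl hy⟩, fun i hi => ?_⟩
    rcases Nat.lt_succ_iff_lt_or_eq.1 hi with hi | rfl
    · simpa [List.getElem_append_left hi, List.take_append, Nat.sub_eq_zero_of_le hi.le]
        using h i hi
    · simpa using hx

lemma FiringSeq.append_filter {l' : List V} (hl : FiringSeq G c l) (hl' : FiringSeq G c' l')
    (hc : ∀ y ∈ l', y ∉ l → c' y ≤ c y) : FiringSeq G c (l ++ l'.filter (· ∉ l)) := by
  induction l' using List.reverseRecOn with
  | nil => simpa
  | append_singleton l' y ih =>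
    obtain ⟨hl', hyl', hy⟩ := firingSeq_append_singleton.1 hl'
    have ih := ih hl' fun z hz => hc z (by simp [hz])
    by_cases hyl : y ∈ l
    · simpa [hyl] using ih
    rw [List.filter_append, List.filter_singleton, decide_eq_true hyl, cond_true,
      ← List.append_assoc, firingSeq_append_singleton]
    refine ⟨ih, by simp [hyl, hyl'], ?_⟩
    calc deg G y ≤ c' y + 2 * nbr G y l' := hy
      _ ≤ c y + 2 * nbr G y (l ++ l'.filter (· ∉ l)) := by
        have hsub : ∀ z ∈ l', z ∈ l ++ l'.filter (· ∉ l) := fun z hz => by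
          by_cases h : z ∈ l <;> simp [h, hz]
        grw [hc y (by simp) hyl, nbr_mono hsub]

lemma Cleaned.mono (h : c ≤ c') (hv : Cleaned G c v) : Cleaned G c' v :=
  let ⟨l, hl, hvl⟩ := hv
  ⟨l, hl.mono h, hvl⟩

lemma Over.mono (h : c ≤ c') (hc : Over G c) : Over G c' := fun v => (hc v).mono h

lemma cleaned_add_single_iff (hv : Cleaned G c v) :
    Cleaned G (c + Pi.single v 1) u ↔ Cleaned G c u := by
  refine ⟨fun ⟨l', hl', hul'⟩ => ?_, Cleaned.mono le_self_add⟩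
  obtain ⟨l, hl, hvl⟩ := hv
  refine ⟨_, hl.append_filter hl' fun y _ hyl => ?_, ?_⟩
  · simp [show y ≠ v by rintro rfl; exact hyl hvl]
  · by_cases hul : u ∈ l <;> simp [*]

lemma over_add_single_iff (hv : Cleaned G c v) : Over G (c + Pi.single v 1) ↔ Over G c :=
  forall_congr' fun _ => cleaned_add_single_iff hv

variable {mv : Bool} {n : ℕ}

lemma val_zero : val G mv 0 c = 0 := by cases mv <;> rfl

lemma val_of_over (h : Over G c) : val G mv n c = 0 := by
  cases n <;> cases mv <;> simp [val, h]

noncomputable def moveValues (G : SimpleGraph V) (mv : Bool) (n : ℕ) (c : V → ℕ) : Set ℕ :=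
  (fun v => val G mv n (c + Pi.single v 1)) '' {v | ¬ Cleaned G c v}

lemma setOf_eq_moveValues : {k | ∃ v, ¬ Cleaned G c v ∧
    k = val G mv n (Function.update c v (c v + 1))} = moveValues G mv n c := by
  ext k
  simp [moveValues, update_add_one_eq_add_single, eq_comm]

lemma val_true_succ (h : ¬ Over G c) :
    val G true (n + 1) c = sInf (moveValues G false n c) + 1 := by
  simp only [val, h, if_false, if_true, setOf_eq_moveValues, add_comm]

lemma val_false_succ (h : ¬ Over G c) :
    val G false (n + 1) c = sSup (moveValues G true n c) + 1 := by
  simp only [val, h, if_false, Bool.false_eq_true, setOf_eq_moveValues, add_comm]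

lemma val_true_succ_le (hv : ¬ Cleaned G c v) :
    val G true (n + 1) c ≤ val G false n (c + Pi.single v 1) + 1 := by
  rw [val_true_succ fun h => hv (h v)]
  exact Nat.add_le_add_right (Nat.sInf_le (Set.mem_image_of_mem _ hv)) 1

lemma exists_val_true_succ_eq (h : ¬ Over G c) :
    ∃ v, ¬ Cleaned G c v ∧ val G true (n + 1) c = val G false n (c + Pi.single v 1) + 1 := by
  obtain ⟨v, hv⟩ := not_forall.1 h
  have hne : (moveValues G false n c).Nonempty := Set.Nonempty.image _ ⟨v, hv⟩
  obtain ⟨u, hu, hk⟩ := Nat.sInf_mem hne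
  exact ⟨u, hu, by rw [val_true_succ h, ← hk]⟩

lemma val_true_add_single_lt (hv : ¬ Cleaned G c v) :
    val G true n (c + Pi.single v 1) < val G false (n + 1) c := by
  rw [val_false_succ fun h => hv (h v)]
  have hmem : val G true n (c + Pi.single v 1) ∈ moveValues G true n c := ⟨v, hv, rfl⟩
  refine Nat.lt_succ_of_le (le_csSup ?_ hmem)
  exact ((Set.finite_univ.image _).subset (Set.image_mono (Set.subset_univ _))).bddAbove

lemma val_false_succ_le {B : ℕ} (h : ¬ Over G c)
    (hB : ∀ v, ¬ Cleaned G c v → val G true n (c + Pi.single v 1) < B) :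
    val G false (n + 1) c ≤ B := by
  obtain ⟨v, hv⟩ := not_forall.1 h
  have hsup : sSup (moveValues G true n c) ≤ B - 1 := by
    refine csSup_le (Set.Nonempty.image _ ⟨v, hv⟩) ?_
    rintro _ ⟨w, hw, rfl⟩
    have := hB w hw
    dsimp only
    omega
  have := hB v hv
  rw [val_false_succ h]
  omega

lemma val_add_single_of_cleaned (hv : Cleaned G c v) :
    val G mv n (c + Pi.single v 1) = val G mv n c := by
  induction n generalizing c mv with
  | zero => simp only [val_zero]
  | succ n ih =>
    by_cases ho : Over G c
    · rw [val_of_over ho, val_of_over ((over_add_single_iff hv).2 ho)]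
    have ho' : ¬ Over G (c + Pi.single v 1) := mt (over_add_single_iff hv).1 ho
    have hmoves : ∀ mv', moveValues G mv' n (c + Pi.single v 1) = moveValues G mv' n c := by
      intro mv'
      ext k
      simp only [moveValues, Set.mem_image, Set.mem_ofPred_eq, cleaned_add_single_iff hv]
      refine exists_congr fun w => and_congr_right fun _ => ?_
      rw [add_right_comm, ih (hv.mono le_self_add)]
    cases mv
    · rw [val_false_succ ho, val_false_succ ho', hmoves]
    · rw [val_true_succ ho, val_true_succ ho', hmoves]

lemma val_antitone : Antitone (val G mv n) := by
  induction n generalizing mv with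
  | zero => intro c c' _; simp only [val_zero, le_refl]
  | succ n ih =>
    intro c c' h
    by_cases ho' : Over G c'
    · simp [val_of_over ho']
    have ho : ¬ Over G c := fun hc => ho' (hc.mono h)
    cases mv
    · refine val_false_succ_le ho' fun w hw => ?_
      have h₁ := val_true_add_single_lt (n := n) fun hc => hw (hc.mono h)
      have h₂ := ih (mv := true) (add_le_add_left h (Pi.single w 1))
      omega
    · obtain ⟨u, hu, hval⟩ := exists_val_true_succ_eq (n := n) ho
      -- if `u` is clean in `c'`, brushing elsewhere is no worse than the free brush on `u`
      have hu' : val G true (n + 1) c' ≤ val G false n (c' + Pi.single u 1) + 1 := by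
        by_cases hcu : Cleaned G c' u
        · obtain ⟨z, hz⟩ := not_forall.1 ho'
          calc val G true (n + 1) c' ≤ val G false n (c' + Pi.single z 1) + 1 :=
                val_true_succ_le hz
            _ ≤ val G false n c' + 1 := by grw [ih le_self_add]
            _ = val G false n (c' + Pi.single u 1) + 1 := by rw [val_add_single_of_cleaned hcu]
        · exact val_true_succ_le hcu
      calc val G true (n + 1) c' ≤ val G false n (c' + Pi.single u 1) + 1 := hu'
        _ ≤ val G false n (c + Pi.single u 1) + 1 := by grw [ih (add_le_add_left h _)]
        _ = val G true (n + 1) c := hval.symm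

lemma val_monotone_fuel : Monotone fun n => val G mv n c := by
  refine monotone_nat_of_le_succ fun n => ?_
  induction n generalizing mv c with
  | zero => simp only [val_zero, zero_le]
  | succ n ih =>
    by_cases ho : Over G c
    · simp [val_of_over ho]
    cases mv
    · refine val_false_succ_le ho fun v hv => ?_
      have h₁ := val_true_add_single_lt (n := n + 1) hv
      have h₂ := ih (mv := true) (c := c + Pi.single v 1)
      omega
    · obtain ⟨u, hu, hval⟩ := exists_val_true_succ_eq (n := n + 1) ho
      calc val G true (n + 1) c ≤ val G false n (c + Pi.single u 1) + 1 := val_true_succ_le hu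
        _ ≤ val G false (n + 1) (c + Pi.single u 1) + 1 := by grw [ih]
        _ = val G true (n + 1 + 1) c := hval.symm

theorem val_le_val_add_single_add_two : val G mv n c ≤ val G mv n (c + Pi.single x 1) + 2 := by
  induction n generalizing mv c x with
  | zero => simp only [val_zero, zero_le]
  | succ n ih =>
    have hswap : ∀ c, val G true n c ≤ val G false (n + 1) c + 1 := by
      intro c
      by_cases ho : Over G c
      · simp [val_of_over ho]
      obtain ⟨z, hz⟩ := not_forall.1 ho
      have h₁ := ih (mv := true) (c := c) (x := z)
      have h₂ := val_true_add_single_lt (n := n) hz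
      omega
    by_cases ho : Over G c
    · simp [val_of_over ho]
    cases mv
    · refine val_false_succ_le ho fun w hw => ?_
      by_cases hw' : Cleaned G (c + Pi.single x 1) w
      · by_cases hx : Cleaned G (c + Pi.single w 1) x
        · have h₁ : val G true n (c + Pi.single w 1) = val G true n (c + Pi.single x 1) := by
            rw [← val_add_single_of_cleaned hx, add_right_comm, val_add_single_of_cleaned hw']
          have h₂ := hswap (c + Pi.single x 1)
          omega
        · -- Min answers at `x`, which reaches `c + 1_x` up to the wasted brush on `w`
          cases n with
          | zero => simp only [val_zero]; omega
          | succ m =>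
            have h₁ := val_true_succ_le (n := m) hx
            rw [add_right_comm, val_add_single_of_cleaned hw'] at h₁
            have h₂ := val_monotone_fuel (G := G) (mv := false) (c := c + Pi.single x 1)
              (show m ≤ m + 1 + 1 by omega)
            dsimp only at h₂
            omega
      · have h₁ := ih (mv := true) (c := c + Pi.single w 1) (x := x)
        rw [add_right_comm] at h₁
        have h₂ := val_true_add_single_lt (n := n) hw'
        omega
    · by_cases ho' : Over G (c + Pi.single x 1)
      · have hx : ¬ Cleaned G c x := fun hx => ho ((over_add_single_iff hx).1 ho')
        have h₁ := val_true_succ_le (n := n) hx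
        rw [val_of_over ho'] at h₁ ⊢
        omega
      · obtain ⟨u, hu, hval⟩ := exists_val_true_succ_eq (n := n) ho'
        have h₁ := val_true_succ_le (n := n) fun h => hu (h.mono le_self_add)
        have h₂ := ih (mv := false) (c := c + Pi.single u 1) (x := x)
        rw [add_right_comm] at h₂
        omega

theorem val_le_val_add_add_two_mul_sum (c d : V → ℕ) :
    val G mv n c ≤ val G mv n (c + d) + 2 * ∑ v, d v :=
  le_add_mul_sum_of_le_add_single (fun _ _ => val_le_val_add_single_add_two) c d

end BrushGame

/-- If the configuration `f` dominates `g`, then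
`bg(G;f) ≤ bg(G;g)`, `b̂g(G;f) ≤ b̂g(G;g)`, and moreover
`bg(G;g) − bg(G;f) ≤ 2·∑_v (f(v) − g(v))` and `b̂g(G;g) − b̂g(G;f) ≤ 2·∑_v (f(v) − g(v))`. -/
theorem game_brush_number_domination {V : Type*} [Fintype V] (G : SimpleGraph V)
    (f g : V → ℕ) (hdom : ∀ v, g v ≤ f v) :
    BrushGame.bgFrom G f ≤ BrushGame.bgFrom G g ∧
      BrushGame.bghatFrom G f ≤ BrushGame.bghatFrom G g ∧
      (BrushGame.bgFrom G g : ℤ) - BrushGame.bgFrom G f ≤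
        2 * ∑ v, ((f v : ℤ) - g v) ∧
      (BrushGame.bghatFrom G g : ℤ) - BrushGame.bghatFrom G f ≤
        2 * ∑ v, ((f v : ℤ) - g v) := by
  have hsum : ∑ v, ((f v : ℤ) - g v) = ((∑ v, (f - g) v : ℕ) : ℤ) := by
    push_cast [Pi.sub_apply, Nat.cast_sub (hdom _)]
    rfl
  have hdiff : ∀ mv, (BrushGame.val G mv (BrushGame.fuel G) g : ℤ) -
      BrushGame.val G mv (BrushGame.fuel G) f ≤ 2 * ∑ v, ((f v : ℤ) - g v) := by
    intro mv
    have h := BrushGame.val_le_val_add_add_two_mul_sum (G := G) (mv := mv) (n := BrushGame.fuel G)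
      g (f - g)
    rw [add_tsub_cancel_of_le hdom] at h
    omega
  exact ⟨BrushGame.val_antitone hdom, BrushGame.val_antitone hdom, hdiff true, hdiff false⟩
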